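/- arXiv:2604.00338 — 2 statements merged into one kernel-verified Lean document; each statement's English description precedes it below -/
import Mathlib

section
/- For each experiment i = 0, …, N_t−1 and each row index r = 1, …, d, let h_r^{(i)} ∈ ℝ^{N_c} be deterministic rows and let h̃_r^{(i)} = h_r^{(i)} + η_r^{(i)} be noisy rows, where every entry of every noise vector η_r^{(i)} has expectation m₁ and second moment m₂, and for r ≠ s the entries η_{r,k}^{(i)} and η_{s,k}^{(i)} are independent for each coordinate k. Define the true aggregate matrix M_𝒟 with entries (M_𝒟)_{(r,s)} := (1/N_t) Σ_{i=0}^{N_t−1} ⟨h_r^{(i)}, h_s^{(i)}⟩, and the empirical estimator M̂_𝒟 with entries (M̂_𝒟)_{(r,r)} := (1/N_t) Σ_i ⟨h̃_r^{(i)}, h̃_r^{(i)}⟩ − 2 m₁ ((1/N_t) Σ_i ⟨h̃_r^{(i)}, 𝟏⟩) + N_c (2 m₁² − m₂) on the diagonal, and (M̂_𝒟)_{(r,s)} := (1/N_t) Σ_i ⟨h̃_r^{(i)}, h̃_s^{(i)}⟩ − m₁ ((1/N_t) Σ_i ⟨h̃_r^{(i)} + h̃_s^{(i)}, 𝟏⟩)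 + N_c m₁² for r ≠ s. Then the estimator is unbiased entry-wise: E[(M̂_𝒟)_{(r,s)}] = (M_𝒟)_{(r,s)} for all r, s. -/
open MeasureTheory ProbabilityTheory Matrix

/-!
With the centred noise `ξ = η - m₁ 𝟏`, the correction terms of the estimator complete the square:
`⟨h̃_r, h̃_s⟩ - m₁ ⟨h̃_r + h̃_s, 𝟏⟩ + N_c m₁² = ⟨h_r + ξ_r, h_s + ξ_s⟩`, so the estimator is the
average of these inner products minus `N_c κ`, where `κ = m₂ - m₁²` if `r = s` and `κ = 0`
otherwise. The expectation of `⟨h_r + ξ_r, h_s + ξ_s⟩` is `⟨h_r, h_s⟩` plus the sum of the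
coordinate covariances `Cov(η_{r,k}, η_{s,k})`, which is the variance `m₂ - m₁²` on the diagonal
and vanishes off it by independence: it is exactly `N_c κ`.
-/

theorem dotProduct_sub_const_sub_const {ι : Type*} [Fintype ι] (u v : ι → ℝ) (c : ℝ) :
    (u - fun _ => c) ⬝ᵥ (v - fun _ => c)
      = u ⬝ᵥ v - c * ((u + v) ⬝ᵥ fun _ => 1) + Fintype.card ι * c ^ 2 := by
  rw [show (Fintype.card ι : ℝ) * c ^ 2 = ∑ _ : ι, c ^ 2 by simp]
  simp only [dotProduct, Pi.sub_apply, Pi.add_apply, mul_one, Finset.mul_sum,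
    ← Finset.sum_sub_distrib, ← Finset.sum_add_distrib]
  exact Finset.sum_congr rfl fun _ _ => by ring

section Moments

variable {Ω ι : Type*} [MeasurableSpace Ω] {μ : Measure Ω}

theorem integrable_dotProduct [Fintype ι] {X Y : Ω → ι → ℝ} (hX : ∀ k, MemLp (fun ω => X ω k) 2 μ)
    (hY : ∀ k, MemLp (fun ω => Y ω k) 2 μ) : Integrable (fun ω => X ω ⬝ᵥ Y ω) μ :=
  integrable_finsetSum _ fun k _ => (hX k).integrable_mul (hY k)

theorem memLp_const_add_sub_integral [IsFiniteMeasure μ] {p : ENNReal} {Z : Ω → ℝ}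
    (hZ : MemLp Z p μ) (c : ℝ) : MemLp (fun ω => c + Z ω - μ[Z]) p μ :=
  ((memLp_const c).add hZ).sub (memLp_const _)

variable [IsProbabilityMeasure μ]

theorem integrable_const_add_sub_mean_dotProduct [Fintype ι] {X Y : Ω → ι → ℝ}
    (hX : ∀ k, MemLp (fun ω => X ω k) 2 μ) (hY : ∀ k, MemLp (fun ω => Y ω k) 2 μ)
    (a b : ι → ℝ) :
    Integrable (fun ω =>
      (a + X ω - fun k => ∫ ω', X ω' k ∂μ) ⬝ᵥ (b + Y ω - fun k => ∫ ω', Y ω' k ∂μ)) μ :=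
  integrable_dotProduct (fun k => memLp_const_add_sub_integral (hX k) (a k))
    (fun k => memLp_const_add_sub_integral (hY k) (b k))

theorem integral_const_add_sub_mean_mul {X Y : Ω → ℝ} (hX : MemLp X 2 μ) (hY : MemLp Y 2 μ)
    (a b : ℝ) :
    ∫ ω, (a + X ω - μ[X]) * (b + Y ω - μ[Y]) ∂μ = a * b + cov[X, Y; μ] := by
  set U := fun ω => X ω - μ[X]
  set V := fun ω => Y ω - μ[Y]
  have hU : MemLp U 2 μ := hX.sub (memLp_const _)
  have hV : MemLp V 2 μ := hY.sub (memLp_const _)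
  have hUi : Integrable U μ := hU.integrable one_le_two
  have hVi : Integrable V μ := hV.integrable one_le_two
  have hcentU : ∫ ω, U ω ∂μ = 0 := by
    rw [integral_sub (hX.integrable one_le_two) (integrable_const _), integral_const]; simp
  have hcentV : ∫ ω, V ω ∂μ = 0 := by
    rw [integral_sub (hY.integrable one_le_two) (integrable_const _), integral_const]; simp
  calc ∫ ω, (a + X ω - μ[X]) * (b + Y ω - μ[Y]) ∂μ
      = ∫ ω, (a * b + a * V ω) + (b * U ω + U ω * V ω) ∂μ := by
        congr with ω; simp only [U, V]; ring
    _ = a * b + cov[X, Y; μ] := by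
        rw [integral_add (by exact (integrable_const _).add (hVi.const_mul a))
            (by exact (hUi.const_mul b).add (hU.integrable_mul hV)),
          integral_add (integrable_const _) (hVi.const_mul a),
          integral_add (hUi.const_mul b) (by exact hU.integrable_mul hV)]
        simp [integral_const_mul, hcentU, hcentV, covariance, U, V]

theorem integral_const_add_sub_mean_dotProduct [Fintype ι] {X Y : Ω → ι → ℝ}
    (hX : ∀ k, MemLp (fun ω => X ω k) 2 μ) (hY : ∀ k, MemLp (fun ω => Y ω k) 2 μ)
    (a b : ι → ℝ) :
    ∫ ω, (a + X ω - fun k => ∫ ω', X ω' k ∂μ) ⬝ᵥ (b + Y ω - fun k => ∫ ω', Y ω' k ∂μ) ∂μ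
      = a ⬝ᵥ b + ∑ k, cov[fun ω => X ω k, fun ω => Y ω k; μ] := by
  simp only [dotProduct, Pi.sub_apply, Pi.add_apply]
  rw [integral_finsetSum _ fun k _ => by
    exact (memLp_const_add_sub_integral (hX k) (a k)).integrable_mul
      (memLp_const_add_sub_integral (hY k) (b k))]
  simp only [integral_const_add_sub_mean_mul (hX _) (hY _), Finset.sum_add_distrib]

theorem covariance_eq_ite_of_indepFun [DecidableEq ι] {X : ι → Ω → ℝ} {m₁ m₂ : ℝ}
    (hX : ∀ r, MemLp (X r) 2 μ) (hmean : ∀ r, ∫ ω, X r ω ∂μ = m₁)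
    (hm2 : ∀ r, ∫ ω, X r ω ^ 2 ∂μ = m₂)
    (hindep : ∀ r s, r ≠ s → IndepFun (X r) (X s) μ) (r s : ι) :
    cov[X r, X s; μ] = if r = s then m₂ - m₁ ^ 2 else 0 := by
  split_ifs with hrs
  · subst hrs
    rw [covariance_self (hX r).aestronglyMeasurable.aemeasurable, variance_eq_sub (hX r)]
    simp only [Pi.pow_apply, hm2, hmean]
  · exact (hindep r s hrs).covariance_eq_zero (hX r) (hX s)

end Moments

/-- **Unbiasedness of the empirical estimator `M̂_𝒟`.** Given deterministic rows
`h_r⁽ⁱ⁾` and noisy rows `h̃_r⁽ⁱ⁾ = h_r⁽ⁱ⁾ + η_r⁽ⁱ⁾`, where every noise entry has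
expectation `m₁` and second moment `m₂`, and for `r ≠ s` the entries `η_{r,k}⁽ⁱ⁾`
and `η_{s,k}⁽ⁱ⁾` are coordinatewise independent, the moment-corrected empirical
estimator is entry-wise unbiased for `(M_𝒟)_{(r,s)} = (1/N_t) ∑ᵢ ⟨h_r⁽ⁱ⁾, h_s⁽ⁱ⁾⟩`. -/
theorem statement9 {Ω : Type*} [MeasureSpace Ω] [IsProbabilityMeasure (ℙ : Measure Ω)]
    {d Nt Nc : ℕ} (hNt : 0 < Nt) (m₁ m₂ : ℝ)
    (h : Fin Nt → Fin d → Fin Nc → ℝ) (η : Fin Nt → Fin d → Ω → Fin Nc → ℝ)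
    (hL2 : ∀ i r k, MemLp (fun ω => η i r ω k) 2)
    (hmean : ∀ i r k, (∫ ω, η i r ω k) = m₁)
    (hm2 : ∀ i r k, (∫ ω, (η i r ω k) ^ 2) = m₂)
    (hindep : ∀ i (r s : Fin d), r ≠ s →
      ∀ k, IndepFun (fun ω => η i r ω k) (fun ω => η i s ω k))
    (r s : Fin d) :
    (∫ ω,
      (if r = s then
        (1 / (Nt : ℝ)) * ∑ i, (h i r + η i r ω) ⬝ᵥ (h i r + η i r ω)
          - 2 * m₁ * ((1 / (Nt : ℝ)) * ∑ i, (h i r + η i r ω) ⬝ᵥ (fun _ => (1 : ℝ)))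
          + Nc * (2 * m₁ ^ 2 - m₂)
      else
        (1 / (Nt : ℝ)) * ∑ i, (h i r + η i r ω) ⬝ᵥ (h i s + η i s ω)
          - m₁ * ((1 / (Nt : ℝ)) *
              ∑ i, ((h i r + η i r ω) + (h i s + η i s ω)) ⬝ᵥ (fun _ => (1 : ℝ)))
          + Nc * m₁ ^ 2)) =
      (1 / (Nt : ℝ)) * ∑ i, h i r ⬝ᵥ h i s := by
  have hNt' : (Nt : ℝ) ≠ 0 := Nat.cast_ne_zero.mpr hNt.ne'
  set κ : ℝ := if r = s then m₂ - m₁ ^ 2 else 0 with hκ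
  have hcov : ∀ i k, cov[fun ω => η i r ω k, fun ω => η i s ω k] = κ := fun i k =>
    covariance_eq_ite_of_indepFun (X := fun r ω => η i r ω k) (fun r => hL2 i r k)
      (fun r => hmean i r k) (fun r => hm2 i r k) (fun r s hrs => hindep i r s hrs k) r s
  have hcentered : ∀ i, ∫ ω, (h i r + η i r ω - fun _ => m₁) ⬝ᵥ (h i s + η i s ω - fun _ => m₁)
      = h i r ⬝ᵥ h i s + Nc * κ := by
    intro i
    simpa [hmean, hcov] using
      integral_const_add_sub_mean_dotProduct (hL2 i r) (hL2 i s) (h i r) (h i s)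
  have hint : ∀ i, Integrable fun ω =>
      (h i r + η i r ω - fun _ => m₁) ⬝ᵥ (h i s + η i s ω - fun _ => m₁) := by
    intro i
    simpa only [hmean] using
      integrable_const_add_sub_mean_dotProduct (hL2 i r) (hL2 i s) (h i r) (h i s)
  calc _ = ∫ ω, (1 / (Nt : ℝ)) * ∑ i,
          (h i r + η i r ω - fun _ => m₁) ⬝ᵥ (h i s + η i s ω - fun _ => m₁) - Nc * κ := by
        congr 1 with ω
        simp only [dotProduct_sub_const_sub_const, Fintype.card_fin, add_dotProduct,
          Finset.sum_add_distrib, Finset.sum_sub_distrib, ← Finset.mul_sum, Finset.sum_const,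
          Finset.card_univ, nsmul_eq_mul]
        rw [hκ]
        split_ifs with hrs
        · subst hrs; field_simp; ring
        · field_simp; ring
    _ = (1 / (Nt : ℝ)) * ∑ i, (h i r ⬝ᵥ h i s + Nc * κ) - Nc * κ := by
        rw [integral_sub ((integrable_finsetSum _ fun i _ => hint i).const_mul _)
            (integrable_const _), integral_const_mul, integral_finsetSum _ fun i _ => hint i,
          Finset.sum_congr rfl fun i _ => hcentered i, integral_const, probReal_univ, one_smul]
    _ = (1 / (Nt : ℝ)) * ∑ i, h i r ⬝ᵥ h i s := by
        rw [Finset.sum_add_distrib, Finset.sum_const, Finset.card_univ, Fintype.card_fin,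
          nsmul_eq_mul]
        field_simp
        ring
end

section
/- Let (X_i)_{i=1}^∞ be a sequence of independent, square-integrable real random variables on a probability space such that Σ_{i=1}^∞ Var(X_i)/i² < ∞. Then (1/n) Σ_{i=1}^n (X_i − E[X_i]) → 0 almost surely as n → ∞ (Kolmogorov's strong law of large numbers for independent, not necessarily identically distributed, random variables). -/
open MeasureTheory ProbabilityTheory Filter Finset Topology

/-! The rescaled centred variables `Y i = (X (i+1) - E[X (i+1)]) / (i+1)` are independent, have
mean zero and summable variances. Their partial sums therefore form a martingale bounded in `L²`,
hence in `L¹`, so by Doob's convergence theorem `∑ Y i` converges almost surely. Kronecker's lemma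
turns this convergence into `(1/n) ∑_{i<n} (X (i+1) - E[X (i+1)]) → 0`. -/

theorem Filter.Tendsto.kronecker {a : ℕ → ℝ} {s : ℝ}
    (h : Tendsto (fun n => ∑ i ∈ range n, a i / ((i : ℝ) + 1)) atTop (𝓝 s)) :
    Tendsto (fun n : ℕ => (1 / (n : ℝ)) * ∑ i ∈ range n, a i) atTop (𝓝 0) := by
  set u : ℕ → ℝ := fun n => ∑ i ∈ range n, a i / ((i : ℝ) + 1)
  have summation_by_parts : ∀ n : ℕ, ∑ i ∈ range n, a i = n * u n - ∑ i ∈ range n, u i := by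
    intro n
    induction n with
    | zero => simp
    | succ n ih =>
      simp only [u, sum_range_succ] at ih ⊢
      rw [ih]
      push_cast
      field_simp
      ring
  have := h.sub h.cesaro
  rw [sub_self] at this
  refine this.congr' ?_
  filter_upwards [eventually_ne_atTop 0] with n hn
  rw [summation_by_parts n]
  field_simp

section IndependentSums

variable {Ω : Type*} {mΩ : MeasurableSpace Ω} {μ : Measure Ω} {X : Ω → ℝ} {Y : ℕ → Ω → ℝ}

theorem evariance_eq_eLpNorm_two_sq (hX : μ[X] = 0) : evariance X μ = eLpNorm X 2 μ ^ 2 := by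
  have := eLpNorm_nnreal_pow_eq_lintegral (f := X) (μ := μ) (p := 2) two_ne_zero
  simpa [evariance, hX] using this.symm

theorem eLpNorm_one_le_sqrt_of_variance_le [IsProbabilityMeasure μ] (hX : MemLp X 2 μ)
    (h0 : μ[X] = 0) {V : NNReal} (hV : Var[X; μ] ≤ V) : eLpNorm X 1 μ ≤ NNReal.sqrt V := by
  refine (eLpNorm_le_eLpNorm_of_exponent_le one_le_two hX.1).trans ?_
  rw [← ENNReal.pow_le_pow_left_iff two_ne_zero, ← evariance_eq_eLpNorm_two_sq h0,
    ← hX.ofReal_variance_eq, ← ENNReal.coe_pow, NNReal.sq_sqrt]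
  exact ENNReal.ofReal_le_of_le_toReal hV

theorem martingale_sum_range_succ_of_iIndepFun (hsm : ∀ i, StronglyMeasurable (Y i))
    (hind : iIndepFun Y μ) (hint : ∀ i, Integrable (Y i) μ) (hmean : ∀ i, μ[Y i] = 0) :
    Martingale (fun n => ∑ i ∈ range (n + 1), Y i) (Filtration.natural Y hsm) μ := by
  have := hind.isProbabilityMeasure
  set ℱ := Filtration.natural Y hsm
  have hadp : StronglyAdapted ℱ fun n => ∑ i ∈ range (n + 1), Y i :=
    fun n => stronglyMeasurable_sum _ fun i hi =>
      (Filtration.stronglyAdapted_natural hsm i).mono (ℱ.mono (Nat.lt_succ_iff.1 (mem_range.1 hi)))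
  have hint_sum : ∀ n, Integrable (∑ i ∈ range (n + 1), Y i) μ :=
    fun n => integrable_finsetSum' _ fun i _ => hint i
  refine martingale_nat hadp hint_sum fun n => ?_
  have hnext : μ[Y (n + 1) | ℱ n] =ᵐ[μ] 0 := by
    have := hind.condExp_natural_ae_eq_of_lt hsm (Nat.lt_succ_self n)
    rwa [hmean] at this
  calc ∑ i ∈ range (n + 1), Y i
      = μ[∑ i ∈ range (n + 1), Y i | ℱ n] + 0 := by
        rw [condExp_of_stronglyMeasurable (ℱ.le n) (hadp n) (hint_sum n), add_zero]
    _ =ᵐ[μ] μ[∑ i ∈ range (n + 1), Y i | ℱ n] + μ[Y (n + 1) | ℱ n] :=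
        (EventuallyEq.refl _ _).add hnext.symm
    _ =ᵐ[μ] μ[∑ i ∈ range (n + 1 + 1), Y i | ℱ n] := by
        rw [sum_range_succ _ (n + 1)]
        exact (condExp_add (hint_sum n) (hint _) _).symm

theorem ae_exists_tendsto_sum_of_iIndepFun_of_stronglyMeasurable
    (hsm : ∀ i, StronglyMeasurable (Y i)) (hind : iIndepFun Y μ) (hL2 : ∀ i, MemLp (Y i) 2 μ)
    (hmean : ∀ i, μ[Y i] = 0) (hvar : Summable fun i => Var[Y i; μ]) :
    ∀ᵐ ω ∂μ, ∃ l, Tendsto (fun n => ∑ i ∈ range n, Y i ω) atTop (𝓝 l) := by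
  have := hind.isProbabilityMeasure
  have hint : ∀ i, Integrable (Y i) μ := fun i => (hL2 i).integrable one_le_two
  set V : NNReal := ⟨∑' i, Var[Y i; μ], tsum_nonneg fun i => variance_nonneg (Y i) μ⟩
  have hbdd : ∀ n, eLpNorm (∑ i ∈ range (n + 1), Y i) 1 μ ≤ NNReal.sqrt V := by
    intro n
    refine eLpNorm_one_le_sqrt_of_variance_le (memLp_finsetSum' _ fun i _ => hL2 i) ?_ ?_
    · simp [integral_finsetSum _ fun i _ => hint i, hmean]
    · rw [IndepFun.variance_sum (fun i _ => hL2 i) fun i _ j _ hij => hind.indepFun hij]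
      exact hvar.sum_le_tsum _ fun i _ => variance_nonneg (Y i) μ
  filter_upwards [(martingale_sum_range_succ_of_iIndepFun hsm hind hint hmean).submartingale
    |>.exists_ae_tendsto_of_bdd hbdd] with ω ⟨l, hl⟩
  refine ⟨l, (tendsto_add_atTop_iff_nat 1).1 ?_⟩
  simpa [Finset.sum_apply] using hl

theorem ae_exists_tendsto_sum_of_iIndepFun (hind : iIndepFun Y μ) (hL2 : ∀ i, MemLp (Y i) 2 μ)
    (hmean : ∀ i, μ[Y i] = 0) (hvar : Summable fun i => Var[Y i; μ]) :
    ∀ᵐ ω ∂μ, ∃ l, Tendsto (fun n => ∑ i ∈ range n, Y i ω) atTop (𝓝 l) := by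
  set Y' := fun i => (hL2 i).1.mk (Y i)
  have hY' : ∀ i, Y i =ᵐ[μ] Y' i := fun i => (hL2 i).1.ae_eq_mk
  filter_upwards [ae_exists_tendsto_sum_of_iIndepFun_of_stronglyMeasurable
    (fun i => (hL2 i).1.stronglyMeasurable_mk) ((iIndepFun_congr hY').1 hind)
    (fun i => (hL2 i).ae_eq (hY' i)) (fun i => (integral_congr_ae (hY' i)).symm.trans (hmean i))
    (by simpa only [variance_congr (hY' _)] using hvar), ae_all_iff.2 hY'] with ω hω hYω
  simpa only [hYω] using hω

end IndependentSums

/-- **Kolmogorov's strong law of large numbers** for independent (not necessarily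
identically distributed) square-integrable random variables `(X_i)_{i=1}^∞` with
`∑ Var(X_i)/i² < ∞`: the centered averages `(1/n) ∑_{i=1}^n (X_i − E[X_i])`
converge to `0` almost surely. (Here `X i` plays the role of `X_{i+1}`.) -/
theorem statement10 {Ω : Type*} [MeasureSpace Ω] [IsProbabilityMeasure (ℙ : Measure Ω)]
    (X : ℕ → Ω → ℝ)
    (hindep : iIndepFun (fun i : ℕ => X (i + 1)))
    (hL2 : ∀ i, MemLp (X i) 2)
    (hvar : Summable fun i : ℕ => variance (X (i + 1)) ℙ / ((i : ℝ) + 1) ^ 2) :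
    ∀ᵐ ω, Tendsto
      (fun n : ℕ => (1 / (n : ℝ)) * ∑ i ∈ Finset.range n, (X (i + 1) ω - ∫ ω', X (i + 1) ω'))
      atTop (nhds 0) := by
  set Y : ℕ → Ω → ℝ := fun i ω => (X (i + 1) ω - ∫ ω', X (i + 1) ω') / ((i : ℝ) + 1)
  have hYind : iIndepFun Y := hindep.comp (fun i x => (x - ∫ ω', X (i + 1) ω') / ((i : ℝ) + 1))
    fun i => (measurable_id.sub_const _).div_const _
  have hYL2 : ∀ i, MemLp (Y i) 2 := fun i => by
    simpa only [Y, div_eq_mul_inv, Pi.sub_apply] using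
      ((hL2 (i + 1)).sub (memLp_const _)).mul_const _
  have hYmean : ∀ i, ∫ ω, Y i ω = 0 := fun i => by
    simp [Y, integral_div, integral_sub ((hL2 (i + 1)).integrable one_le_two) (integrable_const _)]
  have hYvar : ∀ i, Var[Y i] = Var[X (i + 1)] / ((i : ℝ) + 1) ^ 2 := fun i => by
    simp only [Y, div_eq_inv_mul _ ((i : ℝ) + 1)]
    rw [variance_const_mul, variance_sub_const (hL2 (i + 1)).1, inv_pow, inv_mul_eq_div]
  filter_upwards [ae_exists_tendsto_sum_of_iIndepFun hYind hYL2 hYmean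
    (by simpa only [hYvar] using hvar)] with ω ⟨l, hl⟩
  exact hl.kronecker
end
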